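/- Let Δ ⊂ ℂ² be a closed polydisc with nonempty interior containing 0, U a bounded connected open neighborhood of Δ with V = U \ Δ connected, and suppose f_1, f_2 : V → ℂ are holomorphic with ζ_1 f_1(ζ) + ζ_2 f_2(ζ) = 1 for all ζ ∈ V. Then a contradiction follows; i.e., no such holomorphic f_1, f_2 exist. -/

import Mathlib

open MeasureTheory Metric Set Complex Real

lemma near_closedBall (c z : ℂ) (r δ : ℝ) (hr : 0 ≤ r) (hδ : 0 ≤ δ)
    (h : dist z c ≤ r + δ) :
    ∃ z', dist z' c ≤ r ∧ dist z z' ≤ δ := by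
  rcases le_or_gt (dist z c) r with h' | h'
  · exact ⟨z, h', by simpa using hδ⟩
  · have hd : (0:ℝ) < dist z c := lt_of_le_of_lt hr h'
    refine ⟨c + (r / dist z c) • (z - c), ?_, ?_⟩
    · have h1 : dist (c + (r / dist z c) • (z - c)) c = |r / dist z c| * dist z c := by
        rw [dist_eq_norm, add_sub_cancel_left, norm_smul, Real.norm_eq_abs, dist_eq_norm]
      rw [h1, _root_.abs_of_nonneg (div_nonneg hr hd.le), div_mul_cancel₀ _ hd.ne']
    · have h2 : z - (c + (r / dist z c) • (z - c)) = (1 - r / dist z c) • (z - c) := by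
        module
      rw [dist_eq_norm, h2, norm_smul, Real.norm_eq_abs,
        _root_.abs_of_nonneg (by rw [sub_nonneg]; exact div_le_one_of_le₀ h'.le hd.le),
        ← dist_eq_norm]
      rw [sub_mul, one_mul, div_mul_cancel₀ _ hd.ne']
      linarith

/-- Fubini for two circle integrals of a continuous function. -/
lemma circleIntegral_swap (F : ℂ → ℂ → ℂ) (c₁ c₂ : ℂ) (R₁ R₂ : ℝ)
    (hR₁ : 0 ≤ R₁) (hR₂ : 0 ≤ R₂)
    (hF : ContinuousOn (fun p : ℂ × ℂ => F p.1 p.2) (sphere c₁ R₁ ×ˢ sphere c₂ R₂)) :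
    (∮ z in C(c₁, R₁), ∮ w in C(c₂, R₂), F z w)
      = ∮ w in C(c₂, R₂), ∮ z in C(c₁, R₁), F z w := by
  have h2π : (0:ℝ) ≤ 2 * π := by positivity
  set I01 : Set ℝ := Icc 0 (2 * π) with hI01
  set G : ℝ → ℝ → ℂ := fun θ φ =>
    deriv (circleMap c₁ R₁) θ • (deriv (circleMap c₂ R₂) φ • F (circleMap c₁ R₁ θ) (circleMap c₂ R₂ φ)) with hG
  have hGcont : ContinuousOn (Function.uncurry G) (I01 ×ˢ I01) := by
    have h1 : Continuous fun p : ℝ × ℝ => deriv (circleMap c₁ R₁) p.1 := by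
      simp only [deriv_circleMap]
      exact ((continuous_circleMap 0 R₁).comp continuous_fst).mul continuous_const
    have h2 : Continuous fun p : ℝ × ℝ => deriv (circleMap c₂ R₂) p.2 := by
      simp only [deriv_circleMap]
      exact ((continuous_circleMap 0 R₂).comp continuous_snd).mul continuous_const
    have h3 : ContinuousOn
        (fun p : ℝ × ℝ => F (circleMap c₁ R₁ p.1) (circleMap c₂ R₂ p.2)) (I01 ×ˢ I01) := by
      refine ContinuousOn.comp (g := fun p : ℂ × ℂ => F p.1 p.2)
        (f := fun p : ℝ × ℝ => (circleMap c₁ R₁ p.1, circleMap c₂ R₂ p.2)) hF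
        (((continuous_circleMap c₁ R₁).comp continuous_fst).prodMk
          ((continuous_circleMap c₂ R₂).comp continuous_snd)).continuousOn
        fun p _ => ⟨circleMap_mem_sphere _ hR₁ _, circleMap_mem_sphere _ hR₂ _⟩
    exact (h1.continuousOn.smul (h2.continuousOn.smul h3))
  have hGint : Integrable (Function.uncurry G)
      ((volume.restrict I01).prod (volume.restrict I01)) := by
    rw [Measure.prod_restrict]
    have := hGcont.integrableOn_compact (μ := volume) (isCompact_Icc.prod isCompact_Icc)
    rwa [Measure.volume_eq_prod] at this
  calc (∮ z in C(c₁, R₁), ∮ w in C(c₂, R₂), F z w)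
      = ∫ θ in I01, ∫ φ in I01, G θ φ := by
        rw [circleIntegral_def_Icc]
        refine integral_congr_ae (Filter.Eventually.of_forall fun θ => ?_)
        dsimp only
        rw [circleIntegral_def_Icc, ← integral_smul]
    _ = ∫ φ in I01, ∫ θ in I01, G θ φ := integral_integral_swap hGint
    _ = ∮ w in C(c₂, R₂), ∮ z in C(c₁, R₁), F z w := by
        rw [circleIntegral_def_Icc]
        refine integral_congr_ae (Filter.Eventually.of_forall fun φ => ?_)
        dsimp only
        rw [circleIntegral_def_Icc, ← integral_smul]
        refine integral_congr_ae (Filter.Eventually.of_forall fun θ => ?_)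
        dsimp only [hG]
        rw [smul_comm]

/-- With `Δ ⊂ ℂ²` a closed polydisc with nonempty interior containing `0`, `U` a bounded
connected open neighborhood of `Δ`, and `V = U \ Δ` connected, there are no holomorphic
`f₁, f₂ : V → ℂ` with `ζ₁ f₁(ζ) + ζ₂ f₂(ζ) = 1` on `V`. -/
theorem stmt13 (a : ℂ × ℂ) (r₁ r₂ : ℝ) (hr₁ : 0 < r₁) (hr₂ : 0 < r₂)
    (Δ U V : Set (ℂ × ℂ))
    (hΔ : Δ = {z : ℂ × ℂ | ‖z.1 - a.1‖ ≤ r₁ ∧ ‖z.2 - a.2‖ ≤ r₂})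
    (h0 : (0 : ℂ × ℂ) ∈ Δ)
    (hU : IsOpen U) (hUb : Bornology.IsBounded U) (hUconn : IsConnected U) (hΔU : Δ ⊆ U)
    (hV : V = U \ Δ) (hVconn : IsConnected V)
    (f₁ f₂ : ℂ × ℂ → ℂ) (hf₁ : AnalyticOnNhd ℂ f₁ V) (hf₂ : AnalyticOnNhd ℂ f₂ V)
    (hid : ∀ z ∈ V, z.1 * f₁ z + z.2 * f₂ z = 1) :
    False := by
  subst hΔ hV
  -- distance form of the polydisc
  have hΔdist : ∀ z : ℂ × ℂ,
      z ∈ {z : ℂ × ℂ | ‖z.1 - a.1‖ ≤ r₁ ∧ ‖z.2 - a.2‖ ≤ r₂} ↔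
      dist z.1 a.1 ≤ r₁ ∧ dist z.2 a.2 ≤ r₂ := by
    intro z; simp [Complex.dist_eq]
  have habs0₁ : dist (0 : ℂ) a.1 ≤ r₁ := by
    have := ((hΔdist 0).1 h0).1; simpa using this
  have habs0₂ : dist (0 : ℂ) a.2 ≤ r₂ := by
    have := ((hΔdist 0).1 h0).2; simpa using this
  -- the polydisc is compact
  have hΔcomp : IsCompact
      {z : ℂ × ℂ | ‖z.1 - a.1‖ ≤ r₁ ∧ ‖z.2 - a.2‖ ≤ r₂} := by
    have : {z : ℂ × ℂ | ‖z.1 - a.1‖ ≤ r₁ ∧ ‖z.2 - a.2‖ ≤ r₂}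
        = closedBall a.1 r₁ ×ˢ closedBall a.2 r₂ := by
      ext z; simp [Complex.dist_eq, Set.mem_prod, mem_closedBall, and_comm]
    rw [this]
    exact (isCompact_closedBall _ _).prod (isCompact_closedBall _ _)
  obtain ⟨δ, hδpos, hthick⟩ := hΔcomp.exists_cthickening_subset_open hU hΔU
  set R₁ := r₁ + δ with hR₁def
  set R₂ := r₂ + δ with hR₂def
  have hR₁pos : 0 < R₁ := by positivity
  have hR₂pos : 0 < R₂ := by positivity
  -- the enlarged polydisc is inside U
  have hKU : ∀ z w : ℂ, dist z a.1 ≤ R₁ → dist w a.2 ≤ R₂ → (z, w) ∈ U := by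
    intro z w hz hw
    obtain ⟨z', hz'1, hz'2⟩ := near_closedBall a.1 z r₁ δ hr₁.le hδpos.le hz
    obtain ⟨w', hw'1, hw'2⟩ := near_closedBall a.2 w r₂ δ hr₂.le hδpos.le hw
    apply hthick
    apply Metric.mem_cthickening_of_dist_le (z, w) (z', w') δ _
      ((hΔdist (z', w')).2 ⟨hz'1, hw'1⟩)
    rw [Prod.dist_eq]
    exact max_le hz'2 hw'2
  -- membership in V on mixed sets
  have hVmem₁ : ∀ z ∈ closedBall a.1 R₁, ∀ w ∈ sphere a.2 R₂, (z, w) ∈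
      U \ {z : ℂ × ℂ | ‖z.1 - a.1‖ ≤ r₁ ∧ ‖z.2 - a.2‖ ≤ r₂} := by
    intro z hz w hw
    refine ⟨hKU z w (mem_closedBall.1 hz) (by rw [mem_sphere] at hw; rw [hw]), ?_⟩
    intro hmem
    have := ((hΔdist (z, w)).1 hmem).2
    rw [mem_sphere] at hw
    simp only at this
    rw [hw] at this
    linarith
  have hVmem₂ : ∀ z ∈ sphere a.1 R₁, ∀ w ∈ closedBall a.2 R₂, (z, w) ∈
      U \ {z : ℂ × ℂ | ‖z.1 - a.1‖ ≤ r₁ ∧ ‖z.2 - a.2‖ ≤ r₂} := by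
    intro z hz w hw
    refine ⟨hKU z w (by rw [mem_sphere] at hz; rw [hz]) (mem_closedBall.1 hw), ?_⟩
    intro hmem
    have := ((hΔdist (z, w)).1 hmem).1
    rw [mem_sphere] at hz
    simp only at this
    rw [hz] at this
    linarith
  have h0b₁ : (0 : ℂ) ∈ ball a.1 R₁ := by
    rw [mem_ball]; rw [hR₁def]; linarith
  have h0b₂ : (0 : ℂ) ∈ ball a.2 R₂ := by
    rw [mem_ball]; rw [hR₂def]; linarith
  -- value of f₂ on the slice z = 0
  have hf20 : ∀ w ∈ sphere a.2 R₂, f₂ (0, w) = w⁻¹ := by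
    intro w hw
    have hwne : w ≠ 0 := by
      rintro rfl
      rw [mem_sphere] at hw
      rw [hw] at habs0₂
      linarith
    have hmem := hVmem₁ 0 (by rw [mem_closedBall]; rw [hR₁def]; linarith) w hw
    have := hid (0, w) hmem
    simp only [zero_mul, zero_add] at this
    field_simp at this ⊢
    linear_combination this
  -- slice differentiability
  have hd₁ : ∀ w ∈ sphere a.2 R₂, ∀ z ∈ closedBall a.1 R₁,
      DifferentiableAt ℂ (fun z => f₂ (z, w)) z := by
    intro w hw z hz
    exact ((hf₂ _ (hVmem₁ z hz w hw)).differentiableAt).comp z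
      (differentiableAt_id.prodMk (differentiableAt_const _))
  have hd₂ : ∀ z ∈ sphere a.1 R₁, ∀ w ∈ closedBall a.2 R₂,
      DifferentiableAt ℂ (fun w => f₂ (z, w)) w := by
    intro z hz w hw
    exact ((hf₂ _ (hVmem₂ z hz w hw)).differentiableAt).comp w
      ((differentiableAt_const _).prodMk differentiableAt_id)
  -- Cauchy integral formula in the z variable
  have hCau : ∀ w ∈ sphere a.2 R₂,
      (∮ z in C(a.1, R₁), z⁻¹ • f₂ (z, w)) = (2 * π * Complex.I : ℂ) • f₂ (0, w) := by
    intro w hw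
    have := Complex.circleIntegral_sub_inv_smul_of_differentiable_on_off_countable
      (c := a.1) (w := 0) (f := fun z => f₂ (z, w)) (s := ∅) countable_empty h0b₁
      (fun z hz => (hd₁ w hw z hz).continuousAt.continuousWithinAt)
      (fun z hz => hd₁ w hw z (ball_subset_closedBall hz.1))
    simpa using this
  -- Cauchy-Goursat in the w variable
  have hGour : ∀ z ∈ sphere a.1 R₁,
      (∮ w in C(a.2, R₂), z⁻¹ • f₂ (z, w)) = 0 := by
    intro z hz
    rw [circleIntegral.integral_smul]
    rw [Complex.circleIntegral_eq_zero_of_differentiable_on_off_countable hR₂pos.le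
      countable_empty (fun w hw => (hd₂ z hz w hw).continuousAt.continuousWithinAt)
      (fun w hw => hd₂ z hz w (ball_subset_closedBall hw.1))]
    simp
  -- Fubini
  have hswap := circleIntegral_swap (fun z w => z⁻¹ • f₂ (z, w)) a.1 a.2 R₁ R₂
    hR₁pos.le hR₂pos.le ?_
  · -- compute both sides
    have hL : (∮ z in C(a.1, R₁), ∮ w in C(a.2, R₂), z⁻¹ • f₂ (z, w)) = 0 := by
      rw [circleIntegral.integral_congr hR₁pos.le
        (g := fun _ => (0 : ℂ)) (fun z hz => hGour z hz)]
      simp [circleIntegral]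
    have hR : (∮ w in C(a.2, R₂), ∮ z in C(a.1, R₁), z⁻¹ • f₂ (z, w))
        = (2 * π * Complex.I : ℂ) * (2 * π * Complex.I : ℂ) := by
      rw [circleIntegral.integral_congr hR₂pos.le
        (g := fun w => (2 * π * Complex.I : ℂ) • (w - 0)⁻¹) ?_]
      · rw [circleIntegral.integral_smul, circleIntegral.integral_sub_inv_of_mem_ball h0b₂,
          smul_eq_mul]
      · intro w hw
        simp only
        rw [hCau w hw, hf20 w hw, sub_zero]
    rw [hL, hR] at hswap
    have hne : (2 * π * Complex.I : ℂ) ≠ 0 := by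
      simp [Real.pi_ne_zero, Complex.I_ne_zero]
    exact hne (mul_self_eq_zero.1 hswap.symm)
  · -- continuity on the torus
    have hsub : sphere a.1 R₁ ×ˢ sphere a.2 R₂ ⊆
        U \ {z : ℂ × ℂ | ‖z.1 - a.1‖ ≤ r₁ ∧ ‖z.2 - a.2‖ ≤ r₂} := by
      rintro ⟨z, w⟩ ⟨hz, hw⟩
      exact hVmem₁ z (sphere_subset_closedBall hz) w hw
    have hne : ∀ p : ℂ × ℂ, p ∈ sphere a.1 R₁ ×ˢ sphere a.2 R₂ → p.1 ≠ 0 := by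
      rintro ⟨z, w⟩ ⟨hz, hw⟩ hz0
      simp only at hz0
      subst hz0
      rw [mem_sphere] at hz
      rw [hz] at habs0₁
      linarith
    exact (continuousOn_fst.inv₀ hne).smul (hf₂.continuousOn.mono hsub)
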